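/- Let T be an admissible tuple of type 1 or 2 with nonempty I_NS(T), let (W_q) be the canonical partition of I_NS(T), and fix u with W_u ≠ ∅. Let M_u^h be the number of multiedges of G_h' incident to W_u (h = 1,2), and let Y be the set of left vertices used by the switching from G₁' to G₂' (Y = ∅ if G₁' = G₂'). Then: if Y ∩ W_u = ∅, we have max(|W_u| − 2, 1) ≤ 2M_u¹ − 1 = 2M_u² − 1; if Y ∩ W_u ≠ ∅, then Y ⊆ W_u and |W_u| ≤ 2 + M_u¹ + M_u². In either case |W_u| ≤ 2 + M_u¹ + M_u². -/

import Mathlib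

open Finset

/-- A bipartite multigraph on `[n] ⊔ [m]` encoded by its adjacency (multiplicity) matrix. -/
def IsReg (n d : ℕ) (A : Fin n → Fin n → ℕ) : Prop :=
  (∀ i, ∑ j, A i j = d) ∧ (∀ j, ∑ i, A i j = d)

/-- A multigraph is simple if all multiplicities are at most one. -/
def IsSimpleG {n m : ℕ} (A : Fin n → Fin m → ℕ) : Prop := ∀ i j, A i j ≤ 1

/-- The simple switching `⟨i,i',j,j'⟩`: replace the edges `(i,j)` and `(i',j')` by
`(i,j')` and `(i',j)`. -/
def switchM {n m : ℕ} (A : Fin n → Fin m → ℕ) (i i' : Fin n) (j j' : Fin m) :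
    Fin n → Fin m → ℕ :=
  fun a b =>
    if a = i ∧ b = j then A a b - 1
    else if a = i' ∧ b = j' then A a b - 1
    else if a = i ∧ b = j' then A a b + 1
    else if a = i' ∧ b = j then A a b + 1
    else A a b

/-- Two multigraphs are adjacent if one is obtained from the other by a simple switching
operated on two non-incident edges. -/
def AdjacentM {n : ℕ} (A B : Fin n → Fin n → ℕ) : Prop :=
  ∃ i i' j j', i ≠ i' ∧ j ≠ j' ∧ 0 < A i j ∧ 0 < A i' j' ∧ B = switchM A i i' j j'

/-- `Cat_{n,d}(k)`: `d`-regular bipartite multigraphs with exactly `k` multiplicity-2 edges,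
no two of them incident, and no multiplicities `≥ 3`. -/
def InCat (n d k : ℕ) (A : Fin n → Fin n → ℕ) : Prop :=
  IsReg n d A ∧ (∀ i j, A i j ≤ 2) ∧
    (Finset.univ.filter fun p : Fin n × Fin n => A p.1 p.2 = 2).card = k ∧
    (∀ i j j', A i j = 2 → A i j' = 2 → j = j') ∧
    (∀ i i' j, A i j = 2 → A i' j = 2 → i = i')

/-- The set of multiedges (multiplicity-2 edges) of a multigraph. -/
def MEs {n : ℕ} (A : Fin n → Fin n → ℕ) : Finset (Fin n × Fin n) :=
  Finset.univ.filter fun p => A p.1 p.2 = 2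

/-- The data of a simple path starting at a multigraph `A ∈ Cat_{n,d}(k)`: to each
multiedge `e = (i_s, j_s)` of `A` it assigns the auxiliary edge `f e = (i'_s, j'_s)` used by
the corresponding simple switching `⟨i_s, i'_s, j_s, j'_s⟩`.  The auxiliary left (resp. right)
vertices are pairwise distinct, avoid all multiedge left (resp. right) vertices, and the
switching creates no multiple edges. -/
def SimplePathData {n : ℕ} (A : Fin n → Fin n → ℕ)
    (f : Fin n × Fin n → Fin n × Fin n) : Prop :=
  (∀ e ∈ MEs A, 0 < A (f e).1 (f e).2 ∧ A (f e).1 e.2 = 0 ∧ A e.1 (f e).2 = 0 ∧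
    ∀ e' ∈ MEs A, (f e).1 ≠ e'.1 ∧ (f e).2 ≠ e'.2) ∧
  ∀ e ∈ MEs A, ∀ e' ∈ MEs A, e ≠ e' → (f e).1 ≠ (f e').1 ∧ (f e).2 ≠ (f e').2

/-- The endpoint of the simple path with data `f` starting at `A`: each multiedge
`(i_s,j_s)` loses one parallel edge, the auxiliary edge `(i'_s,j'_s)` is removed, and the
edges `(i_s,j'_s)` and `(i'_s,j_s)` are added. -/
def endpointM {n : ℕ} (A : Fin n → Fin n → ℕ) (f : Fin n × Fin n → Fin n × Fin n) :
    Fin n → Fin n → ℕ :=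
  fun a b =>
    A a b + ((MEs A).filter fun e => (a = e.1 ∧ b = (f e).2) ∨ (a = (f e).1 ∧ b = e.2)).card
      - ((MEs A).filter fun e => (a = e.1 ∧ b = e.2) ∨ (a = (f e).1 ∧ b = (f e).2)).card

/-- The `s`-neighborhood of a multigraph: all endpoints of simple paths starting at it. -/
def SN {n : ℕ} (A : Fin n → Fin n → ℕ) : Set (Fin n → Fin n → ℕ) :=
  {B | ∃ f, SimplePathData A f ∧ B = endpointM A f}

/-- The anti-expansion measure `Z(G)` of a simple graph. -/
def Zae {n : ℕ} (A : Fin n → Fin n → ℕ) : ℕ :=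
  (Finset.univ.filter fun p : Fin n × Fin n =>
    0 < A p.1 p.2 ∧ ∃ k, k ≠ p.1 ∧ 0 < A k p.2 ∧
      2 ≤ (Finset.univ.filter fun j => 0 < A p.1 j ∧ 0 < A k j).card).card

/-- The set `I(G_h, G_h')` of left vertices used by the simple switchings of the simple
path with data `f` starting at `A`: the multiedge left vertices together with the auxiliary
left vertices. -/
def IsetS {n : ℕ} (A : Fin n → Fin n → ℕ) (f : Fin n × Fin n → Fin n × Fin n) :
    Set (Fin n) :=
  {i | ∃ e ∈ MEs A, i = e.1 ∨ i = (f e).1}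

/-- Validity of a switching datum `s = ((a,b),(a',b'))`, encoding the simple switching
`⟨a,a',b,b'⟩` on a multigraph `A`. -/
def SwOK {n : ℕ} (A : Fin n → Fin n → ℕ)
    (s : (Fin n × Fin n) × (Fin n × Fin n)) : Prop :=
  s.1.1 ≠ s.2.1 ∧ s.1.2 ≠ s.2.2 ∧ 0 < A s.1.1 s.1.2 ∧ 0 < A s.2.1 s.2.2

/-- Application of a switching datum. -/
def applySw {n : ℕ} (A : Fin n → Fin n → ℕ)
    (s : (Fin n × Fin n) × (Fin n × Fin n)) : Fin n → Fin n → ℕ :=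
  switchM A s.1.1 s.2.1 s.1.2 s.2.2

/-- `I(T) = I(G₁,G₁') ∪ I(G₂,G₂')`. -/
def ITot {n : ℕ} (G₁' G₂' : Fin n → Fin n → ℕ)
    (f₁ f₂ : Fin n × Fin n → Fin n × Fin n) : Set (Fin n) :=
  IsetS G₁' f₁ ∪ IsetS G₂' f₂

/-- An `m`-standard edge `e = (i,j)` with respect to the tuple `T = (G₁,G₁',G₂,G₂')`
with path data `f₁, f₂` and (optional) switching `sw` between `G₁'` and `G₂'`. -/
def MStandard {n : ℕ} (G₁ G₁' G₂ G₂' : Fin n → Fin n → ℕ)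
    (f₁ f₂ : Fin n × Fin n → Fin n × Fin n)
    (sw : Option ((Fin n × Fin n) × (Fin n × Fin n)))
    (e : Fin n × Fin n) : Prop :=
  G₁' e.1 e.2 = 2 ∧ G₂' e.1 e.2 = 2 ∧
  (f₁ e).1 ∉ IsetS G₂' f₂ ∧
  (f₂ e).1 ∉ IsetS G₁' f₁ ∧
  G₁ (f₁ e).1 (f₂ e).2 = 0 ∧ G₂ (f₁ e).1 (f₂ e).2 = 0 ∧
  ∀ s, sw = some s →
    s.1.1 ∉ ({e.1, (f₁ e).1, (f₂ e).1} : Set (Fin n)) ∧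
    s.2.1 ∉ ({e.1, (f₁ e).1, (f₂ e).1} : Set (Fin n))

/-- The set `I_ST(T)` of standard left vertices: left vertices of `m`-standard edges and
the associated auxiliary left vertices. -/
def ISTs {n : ℕ} (G₁ G₁' G₂ G₂' : Fin n → Fin n → ℕ)
    (f₁ f₂ : Fin n × Fin n → Fin n × Fin n)
    (sw : Option ((Fin n × Fin n) × (Fin n × Fin n))) : Set (Fin n) :=
  {i | ∃ e, MStandard G₁ G₁' G₂ G₂' f₁ f₂ sw e ∧
    (i = e.1 ∨ i = (f₁ e).1 ∨ i = (f₂ e).1)}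

/-- The switching between `G₁'` and `G₂'` is of type B: it operates on a left vertex of
`I(T)`. -/
def TypeB {n : ℕ} (G₁' G₂' : Fin n → Fin n → ℕ)
    (f₁ f₂ : Fin n × Fin n → Fin n × Fin n)
    (sw : Option ((Fin n × Fin n) × (Fin n × Fin n))) : Prop :=
  ∃ s, sw = some s ∧
    (s.1.1 ∈ ITot G₁' G₂' f₁ f₂ ∨ s.2.1 ∈ ITot G₁' G₂' f₁ f₂)

/-- The set `Ĩ`: the two left vertices of the switching between `G₁'` and `G₂'` if it is of
type B, and `∅` otherwise. -/
def ItildeS {n : ℕ} (G₁' G₂' : Fin n → Fin n → ℕ)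
    (f₁ f₂ : Fin n × Fin n → Fin n × Fin n)
    (sw : Option ((Fin n × Fin n) × (Fin n × Fin n))) : Set (Fin n) :=
  {i | ∃ s, sw = some s ∧
    (s.1.1 ∈ ITot G₁' G₂' f₁ f₂ ∨ s.2.1 ∈ ITot G₁' G₂' f₁ f₂) ∧
    (i = s.1.1 ∨ i = s.2.1)}

/-- The set `I_NS(T)` of non-standard left vertices:
`I_NS(T) = (I(T) \ I_ST(T)) ∪ Ĩ`. -/
def INS {n : ℕ} (G₁ G₁' G₂ G₂' : Fin n → Fin n → ℕ)
    (f₁ f₂ : Fin n × Fin n → Fin n × Fin n)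
    (sw : Option ((Fin n × Fin n) × (Fin n × Fin n))) : Set (Fin n) :=
  (ITot G₁' G₂' f₁ f₂ \ ISTs G₁ G₁' G₂ G₂' f₁ f₂ sw) ∪ ItildeS G₁' G₂' f₁ f₂ sw

/-- Two left vertices are paired if they are operated on together by one of the relevant
simple switchings (a switching of the simple path from `G₁'` to `G₁`, of the simple path
from `G₂'` to `G₂`, or the switching connecting `G₁'` and `G₂'`). -/
def SwPairRel {n : ℕ} (G₁' G₂' : Fin n → Fin n → ℕ)
    (f₁ f₂ : Fin n × Fin n → Fin n × Fin n)
    (sw : Option ((Fin n × Fin n) × (Fin n × Fin n)))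
    (i i' : Fin n) : Prop :=
  (∃ e ∈ MEs G₁', (i = e.1 ∧ i' = (f₁ e).1) ∨ (i' = e.1 ∧ i = (f₁ e).1)) ∨
  (∃ e ∈ MEs G₂', (i = e.1 ∧ i' = (f₂ e).1) ∨ (i' = e.1 ∧ i = (f₂ e).1)) ∨
  (∃ s, sw = some s ∧ ((i = s.1.1 ∧ i' = s.2.1) ∨ (i = s.2.1 ∧ i' = s.1.1)))

/-- The pairing relation restricted to the non-standard set `I_NS(T)`. -/
def SwPairNS {n : ℕ} (G₁ G₁' G₂ G₂' : Fin n → Fin n → ℕ)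
    (f₁ f₂ : Fin n × Fin n → Fin n × Fin n)
    (sw : Option ((Fin n × Fin n) × (Fin n × Fin n)))
    (i i' : Fin n) : Prop :=
  SwPairRel G₁' G₂' f₁ f₂ sw i i' ∧
    i ∈ INS G₁ G₁' G₂ G₂' f₁ f₂ sw ∧ i' ∈ INS G₁ G₁' G₂ G₂' f₁ f₂ sw

/-- The element of the canonical partition of `I_NS(T)` containing the left vertex `i₀`:
the connected component of `i₀` under the pairing relation. -/
def BlockOf {n : ℕ} (G₁ G₁' G₂ G₂' : Fin n → Fin n → ℕ)
    (f₁ f₂ : Fin n × Fin n → Fin n × Fin n)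
    (sw : Option ((Fin n × Fin n) × (Fin n × Fin n)))
    (i₀ : Fin n) : Set (Fin n) :=
  {x | Relation.EqvGen (SwPairNS G₁ G₁' G₂ G₂' f₁ f₂ sw) i₀ x}

/-- The set `Y` of left vertices employed by the switching connecting `G₁'` and `G₂'`. -/
def Ysw {n : ℕ} (sw : Option ((Fin n × Fin n) × (Fin n × Fin n))) : Set (Fin n) :=
  {i | ∃ s, sw = some s ∧ (i = s.1.1 ∨ i = s.2.1)}

/-- The number of multiedges of `A` incident to the set `W` of left vertices. -/
noncomputable def MCount {n : ℕ} (A : Fin n → Fin n → ℕ) (W : Set (Fin n)) : ℕ :=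
  ({e : Fin n × Fin n | A e.1 e.2 = 2 ∧ e.1 ∈ W} : Set (Fin n × Fin n)).ncard

/-!
The block `W` is a connected component of the graph on `I_NS(T)` whose edges are the pairs of
left vertices switched together. An edge meeting `W` comes from a multiedge of `G₁'` or of `G₂'`
incident to `W`, or is the single edge of the switching from `G₁'` to `G₂'`, so the bound
`|V| ≤ |E| + 1` for connected graphs gives `|W| ≤ M¹ + M² + 2`.

If `Y` misses `W`, then `G₁'` and `G₂'` agree on the rows of `W`, so `M¹ = M²`, the connecting
switching contributes no edge, and `M¹ ≥ 1`: a non-standard auxiliary vertex drags the left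
vertex of its multiedge into `I_NS(T)`, hence into `W`. If `Y` meets `W`, the connecting
switching is of type B, so both of its left vertices lie in `I_NS(T)` and are joined in `W`.
-/

theorem Relation.EqvGen.iff_of_rel {α : Type*} {R : α → α → Prop} {P : α → Prop}
    (hR : ∀ x y, R x y → P x ∧ P y) {a b : α} (h : Relation.EqvGen R a b) : P a ↔ P b := by
  induction h with
  | rel x y hxy => exact ⟨fun _ => (hR x y hxy).2, fun _ => (hR x y hxy).1⟩
  | refl => rfl
  | symm _ _ _ ih => exact ih.symm
  | trans _ _ _ _ _ ih₁ ih₂ => exact ih₁.trans ih₂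

theorem ncard_setOf_eqvGen_le {α : Type*} {R : α → α → Prop} (a : α) {S : Set (Sym2 α)}
    (hS : S.Finite)
    (hcover : ∀ x y, Relation.EqvGen R a x → Relation.EqvGen R a y → R x y → x ≠ y →
      s(x, y) ∈ S) :
    {x | Relation.EqvGen R a x}.ncard ≤ S.ncard + 1 := by
  set C := {x | Relation.EqvGen R a x}
  let H : SimpleGraph C := SimpleGraph.fromRel fun x y => R x y
  have hreach : ∀ x y (hxy : Relation.EqvGen R x y) (hx : x ∈ C),
      H.Reachable ⟨x, hx⟩ ⟨y, hx.trans _ _ _ hxy⟩ := by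
    intro x y hxy
    induction hxy with
    | rel x y h =>
      intro hx
      by_cases hne : x = y
      · subst hne; rfl
      · exact SimpleGraph.Adj.reachable ⟨fun h' => hne (congrArg Subtype.val h'), Or.inl h⟩
    | refl x => intro hx; rfl
    | symm x y h ih => intro hy; exact (ih (hy.trans _ _ _ (h.symm _ _))).symm
    | trans x y z hxy _ ih₁ ih₂ => intro hx; exact (ih₁ hx).trans (ih₂ (hx.trans _ _ _ hxy))
  have hconn : H.Connected :=
    (SimpleGraph.connected_iff_exists_forall_reachable H).2
      ⟨⟨a, .refl a⟩, fun x => hreach a x x.2 (.refl a)⟩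
  have hedges : Nat.card H.edgeSet ≤ S.ncard := by
    have := hS.to_subtype
    rw [← Nat.card_coe_set_eq]
    refine Nat.card_le_card_of_injective
      (fun z => ⟨Sym2.map Subtype.val z.1, ?_⟩) fun z w h => ?_
    · obtain ⟨z, hz⟩ := z
      induction z using Sym2.ind with
      | _ x y =>
        obtain ⟨hne, hxy | hyx⟩ := (SimpleGraph.mem_edgeSet H).1 hz
        · exact hcover x y x.2 y.2 hxy (fun h => hne (Subtype.ext h))
        · rw [Sym2.map_mk, Sym2.eq_swap]
          exact hcover y x y.2 x.2 hyx (fun h => hne (Subtype.ext h.symm))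
    · exact Subtype.ext (Sym2.map.injective Subtype.val_injective (congrArg Subtype.val h))
  rw [← Nat.card_coe_set_eq]
  exact hconn.card_vert_le_card_edgeSet_add_one.trans (by omega)

section CanonicalPartition

variable {n : ℕ} {G₁ G₁' G₂ G₂' : Fin n → Fin n → ℕ} {f₁ f₂ : Fin n × Fin n → Fin n × Fin n}
  {sw : Option ((Fin n × Fin n) × (Fin n × Fin n))}

theorem mem_MEs {A : Fin n → Fin n → ℕ} {e : Fin n × Fin n} : e ∈ MEs A ↔ A e.1 e.2 = 2 := by
  simp [MEs]

theorem switchM_of_ne {m : ℕ} (A : Fin n → Fin m → ℕ) {i i' a : Fin n} (hi : a ≠ i)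
    (hi' : a ≠ i') (j j' b : Fin m) : switchM A i i' j j' a b = A a b := by
  simp [switchM, hi, hi']

theorem row_eq_of_notMem_Ysw (hnone : sw = none → G₁' = G₂')
    (hsome : ∀ s, sw = some s → G₂' = applySw G₁' s) {a : Fin n} (ha : a ∉ Ysw sw) :
    G₂' a = G₁' a := by
  cases sw with
  | none => exact congrFun (hnone rfl).symm a
  | some s =>
    funext b
    rw [hsome s rfl]
    exact switchM_of_ne _ (fun h => ha ⟨s, rfl, Or.inl h⟩) (fun h => ha ⟨s, rfl, Or.inr h⟩) _ _ _

theorem MCount_congr_rows {A B : Fin n → Fin n → ℕ} {W : Set (Fin n)}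
    (h : ∀ a ∈ W, A a = B a) : MCount A W = MCount B W := by
  unfold MCount
  congr 1
  exact Set.ext fun e => and_congr_left fun he => by rw [h e.1 he]

def switchingEdges (A : Fin n → Fin n → ℕ) (f : Fin n × Fin n → Fin n × Fin n)
    (W : Set (Fin n)) : Set (Sym2 (Fin n)) :=
  (fun e => s(e.1, (f e).1)) '' {e | A e.1 e.2 = 2 ∧ e.1 ∈ W}

def connectingEdges (sw : Option ((Fin n × Fin n) × (Fin n × Fin n))) (W : Set (Fin n)) :
    Set (Sym2 (Fin n)) :=
  {z | ∃ s, sw = some s ∧ s.1.1 ∈ W ∧ z = s(s.1.1, s.2.1)}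

theorem ncard_switchingEdges_le (A : Fin n → Fin n → ℕ) (f : Fin n × Fin n → Fin n × Fin n)
    (W : Set (Fin n)) : (switchingEdges A f W).ncard ≤ MCount A W :=
  Set.ncard_image_le (Set.toFinite _)

theorem ncard_connectingEdges_le_one (sw : Option ((Fin n × Fin n) × (Fin n × Fin n)))
    (W : Set (Fin n)) : (connectingEdges sw W).ncard ≤ 1 := by
  rw [Set.ncard_le_one_iff_subsingleton]
  rintro _ ⟨s, hs, -, rfl⟩ _ ⟨s', hs', -, rfl⟩
  rw [Option.some_inj.1 (hs.symm.trans hs')]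

theorem connectingEdges_eq_empty {W : Set (Fin n)} (hY : ∀ i ∈ Ysw sw, i ∉ W) :
    connectingEdges sw W = ∅ :=
  Set.eq_empty_of_forall_notMem fun _ ⟨s, hs, h, _⟩ => hY _ ⟨s, hs, Or.inl rfl⟩ h

theorem sym2_mem_switchingEdges {A : Fin n → Fin n → ℕ} {f : Fin n × Fin n → Fin n × Fin n}
    {W : Set (Fin n)} {x y : Fin n} {e : Fin n × Fin n} (he : e ∈ MEs A) (hx : x ∈ W)
    (hy : y ∈ W) (h : (x = e.1 ∧ y = (f e).1) ∨ (y = e.1 ∧ x = (f e).1)) :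
    s(x, y) ∈ switchingEdges A f W := by
  rcases h with ⟨rfl, rfl⟩ | ⟨rfl, rfl⟩
  · exact ⟨e, ⟨mem_MEs.1 he, hx⟩, rfl⟩
  · exact ⟨e, ⟨mem_MEs.1 he, hy⟩, Sym2.eq_swap⟩

theorem sym2_mem_edges_of_swPairRel {W : Set (Fin n)} {x y : Fin n} (hx : x ∈ W) (hy : y ∈ W)
    (h : SwPairRel G₁' G₂' f₁ f₂ sw x y) :
    s(x, y) ∈ switchingEdges G₁' f₁ W ∪ switchingEdges G₂' f₂ W ∪ connectingEdges sw W := by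
  rcases h with ⟨e, he, h⟩ | ⟨e, he, h⟩ | ⟨s, hs, h⟩
  · exact Or.inl (Or.inl (sym2_mem_switchingEdges he hx hy h))
  · exact Or.inl (Or.inr (sym2_mem_switchingEdges he hx hy h))
  · right
    rcases h with ⟨rfl, rfl⟩ | ⟨rfl, rfl⟩
    · exact ⟨s, hs, hx, rfl⟩
    · exact ⟨s, hs, hy, Sym2.eq_swap⟩

theorem ncard_blockOf_le (i₀ : Fin n) :
    (BlockOf G₁ G₁' G₂ G₂' f₁ f₂ sw i₀).ncard ≤
      MCount G₁' (BlockOf G₁ G₁' G₂ G₂' f₁ f₂ sw i₀) +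
        MCount G₂' (BlockOf G₁ G₁' G₂ G₂' f₁ f₂ sw i₀) +
        (connectingEdges sw (BlockOf G₁ G₁' G₂ G₂' f₁ f₂ sw i₀)).ncard + 1 := by
  set W := BlockOf G₁ G₁' G₂ G₂' f₁ f₂ sw i₀
  have hW := ncard_setOf_eqvGen_le i₀ (Set.toFinite _) fun x y hx hy h _ =>
    sym2_mem_edges_of_swPairRel (W := W) hx hy h.1
  have h₁₂ := Set.ncard_union_le (switchingEdges G₁' f₁ W) (switchingEdges G₂' f₂ W)
  have h₁₂₃ := Set.ncard_union_le
    (switchingEdges G₁' f₁ W ∪ switchingEdges G₂' f₂ W) (connectingEdges sw W)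
  have h₁ := ncard_switchingEdges_le G₁' f₁ W
  have h₂ := ncard_switchingEdges_le G₂' f₂ W
  exact hW.trans (by omega)

theorem mem_INS_of_mem_blockOf {i₀ x : Fin n} (hi₀ : i₀ ∈ INS G₁ G₁' G₂ G₂' f₁ f₂ sw)
    (hx : x ∈ BlockOf G₁ G₁' G₂ G₂' f₁ f₂ sw i₀) : x ∈ INS G₁ G₁' G₂ G₂' f₁ f₂ sw :=
  (Relation.EqvGen.iff_of_rel (fun _ _ h => h.2) hx).1 hi₀

theorem Ysw_subset_blockOf {i₀ : Fin n} (hi₀ : i₀ ∈ INS G₁ G₁' G₂ G₂' f₁ f₂ sw)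
    (hY : ∃ i ∈ Ysw sw, i ∈ BlockOf G₁ G₁' G₂ G₂' f₁ f₂ sw i₀) :
    Ysw sw ⊆ BlockOf G₁ G₁' G₂ G₂' f₁ f₂ sw i₀ := by
  obtain ⟨i, ⟨s, rfl, hi⟩, hiW⟩ := hY
  have htypeB : s.1.1 ∈ ITot G₁' G₂' f₁ f₂ ∨ s.2.1 ∈ ITot G₁' G₂' f₁ f₂ := by
    rcases mem_INS_of_mem_blockOf hi₀ hiW with ⟨hI, -⟩ | ⟨s', hs', hB, -⟩
    · rcases hi with rfl | rfl
      exacts [Or.inl hI, Or.inr hI]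
    · rwa [Option.some_inj.1 hs']
  have hpair : SwPairNS G₁ G₁' G₂ G₂' f₁ f₂ (some s) s.1.1 s.2.1 :=
    ⟨Or.inr (Or.inr ⟨s, rfl, Or.inl ⟨rfl, rfl⟩⟩), Or.inr ⟨s, rfl, htypeB, Or.inl rfl⟩,
      Or.inr ⟨s, rfl, htypeB, Or.inr rfl⟩⟩
  have hboth : s.1.1 ∈ BlockOf G₁ G₁' G₂ G₂' f₁ f₂ (some s) i₀ ∧
      s.2.1 ∈ BlockOf G₁ G₁' G₂ G₂' f₁ f₂ (some s) i₀ := by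
    rcases hi with rfl | rfl
    · exact ⟨hiW, hiW.trans _ _ _ (.rel _ _ hpair)⟩
    · exact ⟨hiW.trans _ _ _ (.symm _ _ (.rel _ _ hpair)), hiW⟩
  rintro j ⟨s', hs', rfl | rfl⟩ <;> obtain rfl := Option.some_inj.1 hs'
  exacts [hboth.1, hboth.2]

/-- Applied to a standard edge `e'`, with `v` its auxiliary vertex on the other path: a multiedge
vertex is standard only if its own auxiliary vertex is. -/
theorem aux_eq_of_fst_mem {A : Fin n → Fin n → ℕ} {f : Fin n × Fin n → Fin n × Fin n}
    (hrow : ∀ i j j', A i j = 2 → A i j' = 2 → j = j') (hp : SimplePathData A f)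
    {e e' : Fin n × Fin n} (he : e ∈ MEs A) (he' : e' ∈ MEs A) {v : Fin n}
    (hv : v ∉ IsetS A f) (h : e.1 = e'.1 ∨ e.1 = (f e').1 ∨ e.1 = v) :
    (f e).1 = (f e').1 := by
  rcases h with h | h | h
  · rw [Prod.ext h (hrow _ _ _ (mem_MEs.1 he) (h ▸ mem_MEs.1 he'))]
  · exact absurd h.symm ((hp.1 e' he').2.2.2 e he).1
  · exact absurd (h ▸ ⟨e, he, Or.inl rfl⟩) hv

theorem fst_notMem_ISTs_of_aux₁ (hrow₁ : ∀ i j j', G₁' i j = 2 → G₁' i j' = 2 → j = j')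
    (hp₁ : SimplePathData G₁' f₁) {e : Fin n × Fin n} (he : e ∈ MEs G₁')
    (h : (f₁ e).1 ∉ ISTs G₁ G₁' G₂ G₂' f₁ f₂ sw) : e.1 ∉ ISTs G₁ G₁' G₂ G₂' f₁ f₂ sw :=
  fun ⟨e', hst, hmem⟩ => h ⟨e', hst, Or.inr (Or.inl
    (aux_eq_of_fst_mem hrow₁ hp₁ he (mem_MEs.2 hst.1) hst.2.2.2.1 hmem))⟩

theorem fst_notMem_ISTs_of_aux₂ (hrow₂ : ∀ i j j', G₂' i j = 2 → G₂' i j' = 2 → j = j')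
    (hp₂ : SimplePathData G₂' f₂) {e : Fin n × Fin n} (he : e ∈ MEs G₂')
    (h : (f₂ e).1 ∉ ISTs G₁ G₁' G₂ G₂' f₁ f₂ sw) : e.1 ∉ ISTs G₁ G₁' G₂ G₂' f₁ f₂ sw :=
  fun ⟨e', hst, hmem⟩ => h ⟨e', hst, Or.inr (Or.inr
    (aux_eq_of_fst_mem hrow₂ hp₂ he (mem_MEs.2 hst.2.1) hst.2.2.1 (hmem.imp_right Or.symm)))⟩

theorem MCount_pos_of_mem_ITot_diff_ISTs
    (hrow₁ : ∀ i j j', G₁' i j = 2 → G₁' i j' = 2 → j = j')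
    (hrow₂ : ∀ i j j', G₂' i j = 2 → G₂' i j' = 2 → j = j')
    (hp₁ : SimplePathData G₁' f₁) (hp₂ : SimplePathData G₂' f₂) {i₀ : Fin n}
    (hi₀ : i₀ ∈ ITot G₁' G₂' f₁ f₂ \ ISTs G₁ G₁' G₂ G₂' f₁ f₂ sw) :
    0 < MCount G₁' (BlockOf G₁ G₁' G₂ G₂' f₁ f₂ sw i₀) ∨
      0 < MCount G₂' (BlockOf G₁ G₁' G₂ G₂' f₁ f₂ sw i₀) := by
  unfold MCount
  simp only [Set.ncard_pos (Set.toFinite _)]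
  obtain ⟨hI, hST⟩ := hi₀
  rcases hI with ⟨e, he, rfl | rfl⟩ | ⟨e, he, rfl | rfl⟩
  · exact Or.inl ⟨e, mem_MEs.1 he, .refl _⟩
  · have hfst : e.1 ∈ INS G₁ G₁' G₂ G₂' f₁ f₂ sw :=
      Or.inl ⟨Or.inl ⟨e, he, Or.inl rfl⟩, fst_notMem_ISTs_of_aux₁ hrow₁ hp₁ he hST⟩
    exact Or.inl ⟨e, mem_MEs.1 he, .rel _ _ ⟨Or.inl ⟨e, he, Or.inr ⟨rfl, rfl⟩⟩,
      Or.inl ⟨Or.inl ⟨e, he, Or.inr rfl⟩, hST⟩, hfst⟩⟩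
  · exact Or.inr ⟨e, mem_MEs.1 he, .refl _⟩
  · have hfst : e.1 ∈ INS G₁ G₁' G₂ G₂' f₁ f₂ sw :=
      Or.inl ⟨Or.inr ⟨e, he, Or.inl rfl⟩, fst_notMem_ISTs_of_aux₂ hrow₂ hp₂ he hST⟩
    exact Or.inr ⟨e, mem_MEs.1 he, .rel _ _ ⟨Or.inr (Or.inl ⟨e, he, Or.inr ⟨rfl, rfl⟩⟩),
      Or.inl ⟨Or.inr ⟨e, he, Or.inr rfl⟩, hST⟩, hfst⟩⟩

end CanonicalPartition

theorem stmt15 (n d k₁ k₂ : ℕ)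
    (G₁ G₁' G₂ G₂' : Fin n → Fin n → ℕ)
    (f₁ f₂ : Fin n × Fin n → Fin n × Fin n)
    (sw : Option ((Fin n × Fin n) × (Fin n × Fin n)))
    (hc₁ : InCat n d k₁ G₁') (hc₂ : InCat n d k₂ G₂')
    (hp₁ : SimplePathData G₁' f₁)
    (hp₂ : SimplePathData G₂' f₂)
    (hsw : match sw with
      | none => G₁' = G₂'
      | some s => SwOK G₁' s ∧ G₂' = applySw G₁' s)
    (i₀ : Fin n) (hi₀ : i₀ ∈ INS G₁ G₁' G₂ G₂' f₁ f₂ sw)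
    (W : Set (Fin n)) (hW : W = BlockOf G₁ G₁' G₂ G₂' f₁ f₂ sw i₀) :
    ((∀ i ∈ Ysw sw, i ∉ W) →
        MCount G₁' W = MCount G₂' W ∧
        max ((W.ncard : ℤ) - 2) 1 ≤ 2 * (MCount G₁' W : ℤ) - 1) ∧
    ((∃ i ∈ Ysw sw, i ∈ W) →
        Ysw sw ⊆ W ∧ (W.ncard : ℤ) ≤ 2 + (MCount G₁' W : ℤ) + (MCount G₂' W : ℤ)) ∧
    (W.ncard : ℤ) ≤ 2 + (MCount G₁' W : ℤ) + (MCount G₂' W : ℤ) := by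
  have hbound : W.ncard ≤ MCount G₁' W + MCount G₂' W + (connectingEdges sw W).ncard + 1 :=
    hW ▸ ncard_blockOf_le i₀
  have hconn := ncard_connectingEdges_le_one sw W
  refine ⟨fun hY => ?_, fun hY => ⟨hW ▸ Ysw_subset_blockOf hi₀ (hW ▸ hY), by omega⟩, by omega⟩
  have hM : MCount G₁' W = MCount G₂' W :=
    MCount_congr_rows fun a ha => (row_eq_of_notMem_Ysw (fun h => by subst h; exact hsw)
      (fun s h => by subst h; exact hsw.2) fun hYa => hY a hYa ha).symm
  have hi₀' : i₀ ∈ ITot G₁' G₂' f₁ f₂ \ ISTs G₁ G₁' G₂ G₂' f₁ f₂ sw :=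
    hi₀.resolve_right fun ⟨s, hs, _, h⟩ => hY i₀ ⟨s, hs, h⟩ (hW ▸ .refl i₀)
  have hpos := hW ▸ MCount_pos_of_mem_ITot_diff_ISTs hc₁.2.2.2.1 hc₂.2.2.2.1 hp₁ hp₂ hi₀'
  rw [connectingEdges_eq_empty hY, Set.ncard_empty] at hbound
  exact ⟨hM, max_le (by omega) (by omega)⟩
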